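/- arXiv:2502.06477 — 3 statements merged into one kernel-verified Lean document; each statement's English description precedes it below -/
import Mathlib

section
/- For all real numbers x, y ≥ 0, |x - y| = |h₀(x) - h₀(y)| + |h₁(x) - h₁(y)|. -/
noncomputable def h0 (x : ℝ) : ℝ := min (x - ⌊x / 2⌋) ⌈x / 2⌉
noncomputable def h1 (x : ℝ) : ℝ := max (⌊x / 2⌋ : ℝ) (x - ⌈x / 2⌉)

/-!
Write `x / 2 = n + t` with `n = ⌊x / 2⌋` and `t ∈ [0, 1)`. Then `h₀ x = n + min (2t) 1` and
`h₁ x = n + max 0 (2t - 1)`: on each interval `[2n, 2n + 2]` first `h₀` climbs from `n` to `n + 1`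
while `h₁` stays at `n`, then `h₁` climbs while `h₀` stays. Both are therefore monotone, and since
`h₀ + h₁ = id`, the increments `h₀ x - h₀ y` and `h₁ x - h₁ y` have the sign of `x - y` and add up
to it, so their absolute values add up to `|x - y|`.
-/

open Set

theorem abs_sub_eq_abs_sub_add_abs_sub_of_monotone {α : Type*} [AddCommGroup α] [LinearOrder α]
    [IsOrderedAddMonoid α] {f g : α → α} (hf : Monotone f) (hg : Monotone g)
    (hfg : ∀ x, f x + g x = x) (x y : α) : |x - y| = |f x - f y| + |g x - g y| := by
  have hsplit : x - y = (f x - f y) + (g x - g y) := by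
    conv_lhs => rw [← hfg x, ← hfg y]
    abel
  rw [hsplit, abs_add_eq_add_abs_iff]
  rcases le_total y x with h | h
  · exact .inl ⟨sub_nonneg.2 (hf h), sub_nonneg.2 (hg h)⟩
  · exact .inr ⟨sub_nonpos.2 (hf h), sub_nonpos.2 (hg h)⟩

theorem monotone_floor_add_comp_fract {α : Type*} [Ring α] [LinearOrder α] [IsStrictOrderedRing α]
    [FloorRing α] {φ : α → α} (hφ : MonotoneOn φ (Ico 0 1))
    (hφ_le : ∀ t ∈ Ico 0 1, φ t ≤ φ 0 + 1) :
    Monotone fun x ↦ (⌊x⌋ : α) + φ (Int.fract x) := by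
  intro x y hxy
  have hx : Int.fract x ∈ Ico 0 1 := ⟨Int.fract_nonneg x, Int.fract_lt_one x⟩
  have hy : Int.fract y ∈ Ico 0 1 := ⟨Int.fract_nonneg y, Int.fract_lt_one y⟩
  rcases (Int.floor_mono hxy).eq_or_lt with hfloor | hfloor
  · have hfract : Int.fract x ≤ Int.fract y := by
      rw [Int.fract, Int.fract, hfloor]
      exact sub_le_sub_right hxy _
    simp only [hfloor, add_le_add_iff_left]
    exact hφ hx hy hfract
  · have hfloor' : (⌊x⌋ : α) + 1 ≤ ⌊y⌋ := by exact_mod_cast hfloor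
    calc (⌊x⌋ : α) + φ (Int.fract x) ≤ ⌊x⌋ + (φ 0 + 1) := by gcongr; exact hφ_le _ hx
      _ = (⌊x⌋ + 1) + φ 0 := by abel
      _ ≤ ⌊y⌋ + φ 0 := by gcongr
      _ ≤ ⌊y⌋ + φ (Int.fract y) := by
        gcongr; exact hφ ⟨le_rfl, zero_lt_one⟩ hy (Int.fract_nonneg y)

theorem h0_eq (x : ℝ) : h0 x = ⌊x / 2⌋ + min (2 * Int.fract (x / 2)) 1 := by
  by_cases hx : x / 2 ∈ range Int.cast
  · obtain ⟨n, hn⟩ := hx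
    obtain rfl : x = 2 * n := by linarith
    simp [h0, two_mul]
  · rw [h0, (Int.ceil_eq_floor_add_one_iff_notMem _).2 hx, ← Int.self_sub_floor,
      ← min_add_add_left]
    push_cast
    congr 1; ring

theorem h1_eq (x : ℝ) : h1 x = ⌊x / 2⌋ + max 0 (2 * Int.fract (x / 2) - 1) := by
  by_cases hx : x / 2 ∈ range Int.cast
  · obtain ⟨n, hn⟩ := hx
    obtain rfl : x = 2 * n := by linarith
    simp [h1, two_mul]
  · rw [h1, (Int.ceil_eq_floor_add_one_iff_notMem _).2 hx, ← Int.self_sub_floor,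
      ← max_add_add_left]
    push_cast
    congr 1 <;> ring

theorem h0_add_h1 (x : ℝ) : h0 x + h1 x = x := by
  rw [h0, h1]
  rcases le_total (x - (⌊x / 2⌋ : ℝ)) (⌈x / 2⌉ : ℝ) with h | h
  · rw [min_eq_left h, max_eq_left (by linarith)]; ring
  · rw [min_eq_right h, max_eq_right (by linarith)]; ring

theorem h0_monotone : Monotone h0 := by
  have : Monotone fun u : ℝ ↦ (⌊u⌋ : ℝ) + min (2 * Int.fract u) 1 := by
    refine monotone_floor_add_comp_fract (φ := fun t ↦ min (2 * t) 1) ?_ fun t _ ↦ ?_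
    · exact fun s _ t _ hst ↦ min_le_min_right 1 (by linarith)
    · simp
  intro x y hxy
  rw [h0_eq, h0_eq]
  exact this (div_le_div_of_nonneg_right hxy zero_le_two)

theorem h1_monotone : Monotone h1 := by
  have : Monotone fun u : ℝ ↦ (⌊u⌋ : ℝ) + max 0 (2 * Int.fract u - 1) := by
    refine monotone_floor_add_comp_fract (φ := fun t ↦ max 0 (2 * t - 1)) ?_ fun t ht ↦ ?_
    · exact fun s _ t _ hst ↦ max_le_max_left 0 (by linarith)
    · norm_num
      linarith [ht.2]
  intro x y hxy
  rw [h1_eq, h1_eq]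
  exact this (div_le_div_of_nonneg_right hxy zero_le_two)

theorem abs_sub_eq_abs_h0_add_abs_h1_general (x y : ℝ) :
    |x - y| = |h0 x - h0 y| + |h1 x - h1 y| :=
  abs_sub_eq_abs_sub_add_abs_sub_of_monotone h0_monotone h1_monotone h0_add_h1 x y

theorem abs_sub_eq_abs_h0_add_abs_h1 (x y : ℝ) (hx : 0 ≤ x) (hy : 0 ≤ y) :
    |x - y| = |h0 x - h0 y| + |h1 x - h1 y| :=
  abs_sub_eq_abs_h0_add_abs_h1_general x y
end

section
/- In a switch graph where at least one terminal is reachable from every non-terminal, every integral switching flow x satisfies x(e) < 2^{|V|}·t⁺ for every edge e, where t⁺ is the total number of starting tokens. -/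
open Finset

/-- Outflow of `v`: total flow on the two out-edges `(v, s0 v)` and `(v, s1 v)`,
    where `x v false` is the flow on the even edge and `x v true` on the odd edge. -/
def outflow {V : Type*} (x : V → Bool → ℕ) (v : V) : ℕ := x v false + x v true

/-- Inflow of `v`: total flow on all edges entering `v`. -/
def inflow {V : Type*} [Fintype V] [DecidableEq V]
    (s0 s1 : V → V) (x : V → Bool → ℕ) (v : V) : ℕ :=
  (∑ u : V, if s0 u = v then x u false else 0)
    + (∑ u : V, if s1 u = v then x u true else 0)

/-! A vertex `v` with an out-edge `(v, u)` satisfies `outflow v + 1 ≤ 2 (x(v, u) + 1) ≤ 2 (inflow u + 1)`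
by the switching behaviour, and the inflow of any vertex is at most its outflow or `t⁺`. Starting
from `outflow + 1 ≤ t⁺ + 1` on the terminals, the bound `outflow + 1 ≤ 2ᵏ (t⁺ + 1)` therefore
spreads backwards along edges, one edge per doubling. The set of vertices satisfying it gains a
vertex at every step until it is everything, so it is everything after `|V| - 1` steps; the switching
behaviour once more gives `2 x(v, u) ≤ 2^(|V| - 1) (t⁺ + 1) ≤ 2^|V| t⁺`. -/

theorem Relation.ReflTransGen.exists_rel_notMem_mem {α : Type*} {r : α → α → Prop} {S : Set α}
    {a b : α} (h : Relation.ReflTransGen r a b) (ha : a ∉ S) (hb : b ∈ S) :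
    ∃ c d, r c d ∧ c ∉ S ∧ d ∈ S := by
  induction h using Relation.ReflTransGen.head_induction_on with
  | refl => exact absurd hb ha
  | @head a c hac _ ih =>
    by_cases hc : c ∈ S
    · exact ⟨a, c, hac, ha, hc⟩
    · exact ih hc

section GrowingBackward

variable {α : Type*} [Fintype α] [DecidableEq α] {r : α → α → Prop} {A : ℕ → Finset α}

theorem eq_univ_or_card_le_of_grows_backward (hmono : Monotone A)
    (hstep : ∀ k a b, r a b → b ∈ A k → a ∈ A (k + 1))
    (hreach : ∀ a, ∃ b ∈ A 0, Relation.ReflTransGen r a b) (k : ℕ) :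
    A k = univ ∨ k + 1 ≤ #(A k) := by
  by_cases hk : A k = univ
  · exact .inl hk
  obtain ⟨a, ha⟩ : ∃ a, a ∉ A k := by simpa [eq_univ_iff_forall] using hk
  obtain ⟨b, hb, hab⟩ := hreach a
  induction k with
  | zero => exact .inr (card_pos.mpr ⟨b, hb⟩)
  | succ k ih =>
    have hak : a ∉ A k := fun h => ha (hmono k.le_succ h)
    obtain ⟨c, d, hcd, hc, hd⟩ := hab.exists_rel_notMem_mem hak (hmono k.zero_le hb)
    have hlt : A k ⊂ A (k + 1) :=
      Finset.ssubset_iff_subset_ne.mpr ⟨hmono k.le_succ, fun h => hc (h ▸ hstep k c d hcd hd)⟩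
    have hcard := card_lt_card hlt
    rcases ih (fun h => hak (h ▸ mem_univ a)) hak with h | h
    · exact absurd (h ▸ mem_univ a) hak
    · exact .inr (by omega)

theorem eq_univ_of_grows_backward (hmono : Monotone A)
    (hstep : ∀ k a b, r a b → b ∈ A k → a ∈ A (k + 1))
    (hreach : ∀ a, ∃ b ∈ A 0, Relation.ReflTransGen r a b) :
    A (Fintype.card α - 1) = univ := by
  rcases eq_univ_or_card_le_of_grows_backward hmono hstep hreach (Fintype.card α - 1) with h | h
  · exact h
  · exact eq_univ_of_card _ (le_antisymm (card_le_univ _) (by omega))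

end GrowingBackward

theorem outflow_add_one_le_two_mul {V : Type*} {x : V → Bool → ℕ} {v : V}
    (hv : x v true ≤ x v false ∧ x v false ≤ x v true + 1) (b : Bool) : outflow x v + 1 ≤ 2 * (x v b + 1) := by
  cases b <;> unfold outflow <;> omega

theorem two_mul_le_outflow_add_one {V : Type*} {x : V → Bool → ℕ} {v : V}
    (hv : x v true ≤ x v false ∧ x v false ≤ x v true + 1) (b : Bool) : 2 * x v b ≤ outflow x v + 1 := by
  cases b <;> unfold outflow <;> omega

section SwitchingFlow

variable {V : Type*} [Fintype V] [DecidableEq V] {s0 s1 : V → V} {x : V → Bool → ℕ}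

theorem le_inflow_s0 (v : V) : x v false ≤ inflow s0 s1 x (s0 v) := by
  unfold inflow
  refine le_add_right (le_of_eq_of_le ?_ (single_le_sum (fun _ _ => Nat.zero_le _) (mem_univ v)))
  simp

theorem le_inflow_s1 (v : V) : x v true ≤ inflow s0 s1 x (s1 v) := by
  unfold inflow
  refine le_add_left (le_of_eq_of_le ?_ (single_le_sum (fun _ _ => Nat.zero_le _) (mem_univ v)))
  simp

theorem inflow_le_max_outflow {T : Finset V} {t : V → ℕ}
    (hcons : ∀ v ∉ T, outflow x v = inflow s0 s1 x v)
    (hin : ∑ v ∈ T, inflow s0 s1 x v = ∑ v ∈ T, t v) (v : V) :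
    inflow s0 s1 x v ≤ max (outflow x v) (∑ v ∈ T, t v) := by
  by_cases hv : v ∈ T
  · exact le_max_of_le_right (hin ▸ single_le_sum (fun _ _ => Nat.zero_le _) hv)
  · exact le_max_of_le_left (hcons v hv).ge

theorem outflow_add_one_le_of_edge {T : Finset V} {t : V → ℕ}
    (hswitch : ∀ v, x v true ≤ x v false ∧ x v false ≤ x v true + 1)
    (hcons : ∀ v ∉ T, outflow x v = inflow s0 s1 x v)
    (hin : ∑ v ∈ T, inflow s0 s1 x v = ∑ v ∈ T, t v)
    {v u : V} (hvu : s0 v = u ∨ s1 v = u) {k : ℕ}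
    (hu : outflow x u + 1 ≤ 2 ^ k * (∑ v ∈ T, t v + 1)) :
    outflow x v + 1 ≤ 2 ^ (k + 1) * (∑ v ∈ T, t v + 1) := by
  obtain ⟨b, hb⟩ : ∃ b, x v b ≤ inflow s0 s1 x u := by
    rcases hvu with rfl | rfl
    exacts [⟨false, le_inflow_s0 v⟩, ⟨true, le_inflow_s1 v⟩]
  have hu_in := inflow_le_max_outflow hcons hin u
  have hk : ∑ v ∈ T, t v + 1 ≤ 2 ^ k * (∑ v ∈ T, t v + 1) :=
    le_mul_of_one_le_left (Nat.zero_le _) Nat.one_le_two_pow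
  calc outflow x v + 1 ≤ 2 * (x v b + 1) := outflow_add_one_le_two_mul (hswitch v) b
    _ ≤ 2 * (2 ^ k * (∑ v ∈ T, t v + 1)) := by omega
    _ = 2 ^ (k + 1) * (∑ v ∈ T, t v + 1) := by ring

end SwitchingFlow

theorem lt_two_pow_mul_of_two_mul_le {a n M : ℕ} (hn : 1 ≤ n) (hM : 1 ≤ M)
    (h : 2 * a ≤ 2 ^ (n - 1) * (M + 1)) : a < 2 ^ n * M := by
  have hpos : 0 < 2 ^ n * M := by positivity
  have h2 : 2 * a ≤ 2 ^ n * M :=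
    calc 2 * a ≤ 2 ^ (n - 1) * (M + 1) := h
      _ ≤ 2 ^ (n - 1) * (2 * M) := Nat.mul_le_mul_left _ (by omega)
      _ = 2 ^ n * M := by rw [← mul_assoc, ← pow_succ, Nat.sub_add_cancel hn]
  omega

theorem switching_flow_upper_bound_general
    {V : Type*} [Fintype V] [DecidableEq V]
    (s0 s1 : V → V) (T : Finset V)
    (t : V → ℕ) (htot : 1 ≤ ∑ v ∈ T, t v)
    (x : V → Bool → ℕ)
    (hswitch : ∀ v, x v true ≤ x v false ∧ x v false ≤ x v true + 1)
    (hcons : ∀ v ∉ T, outflow x v = inflow s0 s1 x v)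
    (hterm : ∀ v ∈ T, outflow x v = t v)
    (hreach : ∀ v : V, v ∉ T →
      ∃ w ∈ T, Relation.ReflTransGen (fun a b => s0 a = b ∨ s1 a = b) v w)
    (hin : ∑ v ∈ T, inflow s0 s1 x v = ∑ v ∈ T, t v) :
    ∀ v b, x v b < 2 ^ Fintype.card V * ∑ v ∈ T, t v := by
  intro v b
  set M := ∑ v ∈ T, t v
  let A : ℕ → Finset V := fun k => {u | outflow x u + 1 ≤ 2 ^ k * (M + 1)}
  have hTA : T ⊆ A 0 := fun u hu => by
    simpa [A, hterm u hu] using single_le_sum (fun _ _ => Nat.zero_le _) hu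
  have hA : A (Fintype.card V - 1) = univ := by
    refine eq_univ_of_grows_backward (r := fun a b => s0 a = b ∨ s1 a = b) ?_ ?_ ?_
    · refine monotone_nat_of_le_succ fun k u hu => ?_
      simp only [A, mem_filter_univ] at hu ⊢
      exact hu.trans (Nat.mul_le_mul_right _ (Nat.pow_le_pow_right two_pos k.le_succ))
    · intro k a u hau hu
      simp only [A, mem_filter_univ] at hu ⊢
      exact outflow_add_one_le_of_edge hswitch hcons hin hau hu
    · intro u
      by_cases hu : u ∈ T
      · exact ⟨u, hTA hu, .refl⟩
      · obtain ⟨w, hw, hpath⟩ := hreach u hu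
        exact ⟨w, hTA hw, hpath⟩
  have hv : v ∈ A (Fintype.card V - 1) := hA.symm ▸ mem_univ v
  simp only [A, mem_filter_univ] at hv
  exact lt_two_pow_mul_of_two_mul_le (Fintype.card_pos_iff.mpr ⟨v⟩) htot
    ((two_mul_le_outflow_add_one (hswitch v) b).trans hv)

theorem switching_flow_upper_bound
    {V : Type*} [Fintype V] [DecidableEq V]
    (s0 s1 : V → V) (T : Finset V) (hT : T.Nonempty)
    (t : V → ℕ) (htot : 1 ≤ ∑ v ∈ T, t v)
    (x : V → Bool → ℕ)
    (hswitch : ∀ v, x v true ≤ x v false ∧ x v false ≤ x v true + 1)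
    (hcons : ∀ v ∉ T, outflow x v = inflow s0 s1 x v)
    (hterm : ∀ v ∈ T, outflow x v = t v)
    (hreach : ∀ v : V, v ∉ T →
      ∃ w ∈ T, Relation.ReflTransGen (fun a b => s0 a = b ∨ s1 a = b) v w)
    (hin : ∑ v ∈ T, inflow s0 s1 x v = ∑ v ∈ T, t v) :
    ∀ v b, x v b < 2 ^ Fintype.card V * ∑ v ∈ T, t v :=
  switching_flow_upper_bound_general s0 s1 T t htot x hswitch hcons hterm hreach hin
end

section
/- Let g be the projection to non-terminals of the one-step update of a switch graph with terminals T and integer token numbers (t⁺_v)_{v∈T}. A vector x ∈ (ℕ)^{V∖T} is a fixed point of g if and only if the edge function y defined by y(v,s₀(v)) = h₀(x'_v), y(v,s₁(v)) = h₁(x'_v) (where x' extends x by x'_v = t⁺_v on T) is an integral switching flow. -/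
/-!
On an integer `m` we have `⌊m/2⌋ + ⌈m/2⌉ = m`, so the two arguments of the `min` in `h0` (and of
the `max` in `h1`) coincide, and `h0 n = ⌈n/2⌉`, `h1 n = ⌊n/2⌋` for `n : ℕ`. Hence the edge function
`y` read off from `x'` is always integral, satisfies the switching constraint and has outflow `x'_v`
at every vertex, while its inflow at `v` is exactly `f(x')_v`. Flow conservation at a non-terminal
`v` is therefore the fixed-point equation `g(x)_v = x_v`.
-/

open Finset

/-- One-step update of the switch graph `(V, s0, s1)`. -/
noncomputable def oneStep {V : Type*} [Fintype V] [DecidableEq V]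
    (s0 s1 : V → V) (x : V → ℝ) : V → ℝ :=
  fun v => (∑ u : V, if s0 u = v then h0 (x u) else 0)
    + (∑ u : V, if s1 u = v then h1 (x u) else 0)

/-- Outflow of `v` in an edge flow `y`, where `y v false` is the value on the
    even out-edge `(v, s0 v)` and `y v true` on the odd out-edge `(v, s1 v)`. -/
def outflowR {V : Type*} (y : V → Bool → ℝ) (v : V) : ℝ := y v false + y v true

/-- Inflow of `v` in an edge flow `y`. -/
def inflowR {V : Type*} [Fintype V] [DecidableEq V]
    (s0 s1 : V → V) (y : V → Bool → ℝ) (v : V) : ℝ :=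
  (∑ u : V, if s0 u = v then y u false else 0)
    + (∑ u : V, if s1 u = v then y u true else 0)

section Halving

variable {K : Type*} [Field K] [LinearOrder K] [IsStrictOrderedRing K] [FloorRing K]

theorem Int.ceil_intCast_div_two (m : ℤ) : ⌈(m : K) / 2⌉ = m - ⌊(m : K) / 2⌋ := by
  have half : (m : K) / 2 = m + -((m : K) / 2) := by ring
  conv_lhs => rw [half, Int.ceil_intCast_add, Int.ceil_neg]
  rw [sub_eq_add_neg]

theorem Int.floor_natCast_div_two (n : ℕ) : ⌊(n : K) / 2⌋ = (n / 2 : ℕ) := by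
  have := Int.floor_div_natCast (n : K) 2
  push_cast at this
  rw [this, Int.floor_natCast]
  omega

end Halving

theorem h0_intCast (m : ℤ) : h0 m = m - ⌊(m : ℝ) / 2⌋ := by
  rw [h0, Int.ceil_intCast_div_two]
  push_cast
  exact min_self _

theorem h1_intCast (m : ℤ) : h1 m = ⌊(m : ℝ) / 2⌋ := by
  rw [h1, Int.ceil_intCast_div_two]
  push_cast
  rw [sub_sub_cancel, max_self]

theorem h0_natCast (n : ℕ) : h0 n = (n - n / 2 : ℕ) := by
  rw [← Int.cast_natCast, h0_intCast, Int.cast_natCast, Int.floor_natCast_div_two,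
    Nat.cast_sub (Nat.div_le_self n 2)]
  push_cast
  rfl

theorem h1_natCast (n : ℕ) : h1 n = (n / 2 : ℕ) := by
  rw [← Int.cast_natCast, h1_intCast, Int.cast_natCast, Int.floor_natCast_div_two, Int.cast_natCast]

theorem h0_add_h1_natCast (n : ℕ) : h0 n + h1 n = n := by
  rw [h0_natCast, h1_natCast, ← Nat.cast_add, Nat.sub_add_cancel (Nat.div_le_self n 2)]

theorem h0_sub_h1_natCast (n : ℕ) : h0 n - h1 n = (n % 2 : ℕ) := by
  rw [h0_natCast, h1_natCast, sub_eq_iff_eq_add, ← Nat.cast_add]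
  congr 1
  omega

theorem oneStep_eq_inflowR {V : Type*} [Fintype V] [DecidableEq V] (s0 s1 : V → V)
    {x : V → ℝ} {y : V → Bool → ℝ} (hy : ∀ v, y v false = h0 (x v) ∧ y v true = h1 (x v)) :
    oneStep s0 s1 x = inflowR s0 s1 y := by
  funext v
  simp only [oneStep, inflowR, hy]

theorem fixed_point_iff_integral_switching_flow
    {V : Type*} [Fintype V] [DecidableEq V]
    (s0 s1 : V → V) (T : Finset V) (t : V → ℕ) (x : V → ℕ)
    (ext : V → ℝ) (hext : ∀ v, ext v = if v ∈ T then (t v : ℝ) else (x v : ℝ))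
    (y : V → Bool → ℝ)
    (hy : ∀ v, y v false = h0 (ext v) ∧ y v true = h1 (ext v)) :
    (∀ v ∉ T, oneStep s0 s1 ext v = (x v : ℝ)) ↔
      ((∀ v b, ∃ k : ℕ, y v b = (k : ℝ)) ∧
       (∀ v, y v false - y v true = 0 ∨ y v false - y v true = 1) ∧
       (∀ v ∉ T, outflowR y v = inflowR s0 s1 y v) ∧
       (∀ v ∈ T, outflowR y v = (t v : ℝ))) := by
  set N : V → ℕ := fun v => if v ∈ T then t v else x v with hN
  have hextN : ∀ v, ext v = N v := by
    intro v
    by_cases hv : v ∈ T <;> simp [hext, hN, hv]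
  have integral : ∀ v b, ∃ k : ℕ, y v b = k := by
    rintro v (_ | _)
    · exact ⟨_, by rw [(hy v).1, hextN, h0_natCast]⟩
    · exact ⟨_, by rw [(hy v).2, hextN, h1_natCast]⟩
  have switching : ∀ v, y v false - y v true = 0 ∨ y v false - y v true = 1 := by
    intro v
    rw [(hy v).1, (hy v).2, hextN, h0_sub_h1_natCast]
    rcases Nat.mod_two_eq_zero_or_one (N v) with h | h <;> simp [h]
  have outflow_eq : ∀ v, outflowR y v = N v := by
    intro v
    rw [outflowR, (hy v).1, (hy v).2, hextN, h0_add_h1_natCast]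
  have terminal : ∀ v ∈ T, outflowR y v = t v := by
    intro v hv
    simp [outflow_eq, hN, hv]
  have fixed_iff_conserved : ∀ v ∉ T,
      oneStep s0 s1 ext v = x v ↔ outflowR y v = inflowR s0 s1 y v := by
    intro v hv
    simp [oneStep_eq_inflowR s0 s1 hy, outflow_eq, hN, hv, eq_comm]
  exact ⟨fun h => ⟨integral, switching, fun v hv => (fixed_iff_conserved v hv).1 (h v hv), terminal⟩,
    fun h v hv => (fixed_iff_conserved v hv).2 (h.2.2.1 v hv)⟩
end
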